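/- Let G be a König–Egerváry graph. Then G has a perfect matching if and only if every subgraph H of G of maximum order among subgraphs whose connected components are all single edges or cycles is a spanning subgraph of G (equivalently, prk(G) = |V(G)|). -/

import Mathlib

/-! ## Basic matching terminology -/

/-- `M` is a matching of the simple graph `G`: a set of edges of `G` that are pairwise
non-adjacent, i.e. no two distinct edges of `M` share a vertex. -/
def IsMatching {V : Type} (G : SimpleGraph V) (M : Finset (Sym2 V)) : Prop :=
  (∀ e ∈ M, e ∈ G.edgeSet) ∧
  ∀ e ∈ M, ∀ f ∈ M, e ≠ f → ∀ v : V, ¬(v ∈ e ∧ v ∈ f)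

/-- A vertex `v` is saturated by the edge set `M` if it is an endpoint of some edge of `M`. -/
def Saturates {V : Type} (M : Finset (Sym2 V)) (v : V) : Prop := ∃ e ∈ M, v ∈ e

/-- `M` is a perfect matching of `G`: a matching saturating every vertex of `G`. -/
def IsPerfectMatching {V : Type} (G : SimpleGraph V) (M : Finset (Sym2 V)) : Prop :=
  IsMatching G M ∧ ∀ v : V, Saturates M v

/-- The matching number `μ(G)`: the maximum cardinality of a matching of `G`. -/
noncomputable def matchNum {V : Type} (G : SimpleGraph V) : ℕ :=
  sSup {n | ∃ M : Finset (Sym2 V), IsMatching G M ∧ M.card = n}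

/-- The independence number `α(G)`: the maximum cardinality of a set of pairwise
non-adjacent vertices. -/
noncomputable def indepNum {V : Type} (G : SimpleGraph V) : ℕ :=
  sSup {n | ∃ S : Finset V, (∀ u ∈ S, ∀ v ∈ S, ¬ G.Adj u v) ∧ S.card = n}

/-- `G` is a König–Egerváry graph if `α(G) + μ(G) = |V(G)|`. -/
def IsKonigEgervary {V : Type} [Fintype V] (G : SimpleGraph V) : Prop :=
  indepNum G + matchNum G = Fintype.card V

/-! ## Degrees and graphs whose components are single edges or cycles -/

/-- The degree of `v` in `H`, as the cardinality of its neighbour set. -/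
noncomputable def ndeg {V : Type} (H : SimpleGraph V) (v : V) : ℕ := (H.neighborSet v).ncard

/-- Every connected component of (the finite simple graph) `H` is a single edge (a copy of
`K₂`) or a cycle: every vertex has degree `1` or `2`, and the degree is constant on each
connected component (a finite connected `1`-regular graph is `K₂`, and a finite connected
`2`-regular graph is a cycle). -/
def ComponentsAreEdgesOrCycles {V : Type} (H : SimpleGraph V) : Prop :=
  (∀ v : V, ndeg H v = 1 ∨ ndeg H v = 2) ∧
  ∀ ⦃u v : V⦄, H.Adj u v → ndeg H u = ndeg H v

/-- `H` is a Sachs subgraph of `G`: a spanning subgraph each of whose connected components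
is a single edge or a cycle. -/
def IsSachsSubgraph {V : Type} (G H : SimpleGraph V) : Prop :=
  H ≤ G ∧ ComponentsAreEdgesOrCycles H

/-- `H` has a connected component which is an odd cycle: a component all of whose vertices
have degree `2` (hence a cycle) with an odd number of vertices. -/
def HasOddCycleComponent {V : Type} (H : SimpleGraph V) : Prop :=
  ∃ c : H.ConnectedComponent, (∀ v ∈ c.supp, ndeg H v = 2) ∧ Odd c.supp.ncard

/-- Degree of a vertex in a subgraph. -/
noncomputable def subNdeg {V : Type} {G : SimpleGraph V} (H : G.Subgraph) (v : V) : ℕ :=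
  (H.neighborSet v).ncard

/-- Every connected component of the subgraph `H` of `G` is a single edge or a cycle. -/
def SubComponentsAreEdgesOrCycles {V : Type} {G : SimpleGraph V} (H : G.Subgraph) : Prop :=
  (∀ v ∈ H.verts, subNdeg H v = 1 ∨ subNdeg H v = 2) ∧
  ∀ ⦃u v : V⦄, H.Adj u v → subNdeg H u = subNdeg H v

/-- The subgraph `H` of `G` has a connected component which is an odd cycle. -/
def SubHasOddCycleComponent {V : Type} {G : SimpleGraph V} (H : G.Subgraph) : Prop :=
  ∃ c : H.coe.ConnectedComponent,
    (∀ v ∈ c.supp, subNdeg H ↑v = 2) ∧ Odd c.supp.ncard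

/-- `prk G`: the maximum order of a subgraph of `G` each of whose connected components is a
single edge or a cycle (`0` for an edgeless graph). -/
noncomputable def prk {V : Type} (G : SimpleGraph V) : ℕ :=
  sSup {n | ∃ H : G.Subgraph, SubComponentsAreEdgesOrCycles H ∧ H.verts.ncard = n}

/-- `X` is a vertex cover of `H`: every edge of `H` has an endpoint in `X`. -/
def IsVertexCover {V : Type} (H : SimpleGraph V) (X : Set V) : Prop :=
  ∀ ⦃u v : V⦄, H.Adj u v → u ∈ X ∨ v ∈ X

/-! ## Symmetric differences of matchings -/

/-- The graph on `V` whose edges are the symmetric difference `M₁ △ M₂`. -/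
def symmDiffGraph {V : Type} [DecidableEq V] (M₁ M₂ : Finset (Sym2 V)) : SimpleGraph V :=
  SimpleGraph.fromEdgeSet ↑(symmDiff M₁ M₂)

/-- On the vertex set `S`, consecutive edges of `H` alternate between `M₁` and `M₂`. -/
def AltOn {V : Type} (H : SimpleGraph V) (M₁ M₂ : Finset (Sym2 V)) (S : Set V) : Prop :=
  ∀ ⦃u v w : V⦄, v ∈ S → H.Adj u v → H.Adj v w → u ≠ w →
    (s(u, v) ∈ M₁ ∧ s(v, w) ∈ M₂) ∨ (s(u, v) ∈ M₂ ∧ s(v, w) ∈ M₁)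

/-! ## Perfect flowers -/

/-- `(C, P)` is an `M`-perfect flower: `C` is an odd cycle of length `2k+1` containing
exactly `k` edges of `M`, and `P` is a nontrivial `M`-alternating path whose first and last
edges belong to `M`, such that `V(C) ∩ V(P)` consists exactly of the common endpoint `a`. -/
structure IsPerfectFlower {V : Type} [DecidableEq V] (G : SimpleGraph V)
    (M : Finset (Sym2 V)) {a b : V} (C : G.Walk a a) (P : G.Walk a b) : Prop where
  cycle : C.IsCycle
  odd : Odd C.length
  blossom : C.edges.countP (fun e => e ∈ M) = C.length / 2
  path : P.IsPath
  nontrivial : 0 < P.length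
  alternating : List.Chain' (fun e f => e ∈ M ↔ f ∉ M) P.edges
  firstEdge : ∀ e ∈ P.edges.head?, e ∈ M
  lastEdge : ∀ e ∈ P.edges.getLast?, e ∈ M
  meet : ∀ v : V, (v ∈ C.support ∧ v ∈ P.support) ↔ v = a

/-- The perfect-flower part `PF(G)`: vertices belonging to some `M`-perfect flower, for some
maximum matching `M` of `G`. -/
def PF {V : Type} [DecidableEq V] (G : SimpleGraph V) : Set V :=
  {x | ∃ M : Finset (Sym2 V), IsMatching G M ∧ M.card = matchNum G ∧
    ∃ (a b : V) (C : G.Walk a a) (P : G.Walk a b),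
      IsPerfectFlower G M C P ∧ (x ∈ C.support ∨ x ∈ P.support)}

/-- The perfect-flower-free part `PFF(G) = V(G) \ PF(G)`. -/
def PFF {V : Type} [DecidableEq V] (G : SimpleGraph V) : Set V := (PF G)ᶜ

/-! ## Determinant and permanent of a graph -/

/-- The determinant of the adjacency matrix of `G` over `ℤ`. -/
noncomputable def detG {V : Type} [Fintype V] [DecidableEq V] (G : SimpleGraph V) : ℤ :=
  letI := Classical.decRel G.Adj
  (SimpleGraph.adjMatrix ℤ G).det

/-- The permanent of the adjacency matrix of `G` over `ℤ`. -/
noncomputable def permG {V : Type} [Fintype V] [DecidableEq V] (G : SimpleGraph V) : ℤ :=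
  letI := Classical.decRel G.Adj
  (SimpleGraph.adjMatrix ℤ G).permanent

/-- `det(G[X])`, the determinant of the adjacency matrix of the induced subgraph `G[X]`
(equal to `1` when `X = ∅`, the determinant of the empty matrix). -/
noncomputable def detInd {V : Type} [Fintype V] [DecidableEq V]
    (G : SimpleGraph V) (X : Set V) : ℤ :=
  letI : Fintype ↥X := X.toFinite.fintype
  detG (G.induce X)

/-- `perm(G[X])`, the permanent of the adjacency matrix of the induced subgraph `G[X]`
(equal to `1` when `X = ∅`). -/
noncomputable def permInd {V : Type} [Fintype V] [DecidableEq V]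
    (G : SimpleGraph V) (X : Set V) : ℤ :=
  letI : Fintype ↥X := X.toFinite.fintype
  permG (G.induce X)

/-! ## Auxiliary constructions -/

/-- The subgraph of `G` spanned by the edges of a matching `M`: its vertices are the
endpoints of edges of `M` and its edges are exactly the edges of `M`. -/
def matchingSubgraph {V : Type} (G : SimpleGraph V) (M : Finset (Sym2 V))
    (hM : ∀ e ∈ M, e ∈ G.edgeSet) : G.Subgraph where
  verts := {v | ∃ e ∈ M, v ∈ e}
  Adj u v := s(u, v) ∈ M
  adj_sub h := G.mem_edgeSet.mp (hM _ h)
  edge_vert h := ⟨_, h, Sym2.mem_mk_left _ _⟩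
  symm := ⟨fun u v (h : s(u, v) ∈ M) => show s(v, u) ∈ M by rwa [Sym2.eq_swap]⟩

/-- The restriction of an edge set `M` to the edges with both endpoints in `X`. -/
noncomputable def restrictEdges {V : Type} (M : Finset (Sym2 V)) (X : Set V) :
    Finset (Sym2 V) :=
  letI := Classical.decPred fun e : Sym2 V => ∀ v ∈ e, v ∈ X
  M.filter fun e => ∀ v ∈ e, v ∈ X

/-- `M` is a perfect matching of the induced subgraph `G[X]`: a matching of `G` whose edges
have both endpoints in `X`, saturating every vertex of `X`. -/
def IsPerfectMatchingOn {V : Type} (G : SimpleGraph V) (X : Set V)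
    (M : Finset (Sym2 V)) : Prop :=
  (∀ e ∈ M, e ∈ G.edgeSet ∧ ∀ v ∈ e, v ∈ X) ∧
  (∀ e ∈ M, ∀ f ∈ M, e ≠ f → ∀ v : V, ¬(v ∈ e ∧ v ∈ f)) ∧
  ∀ v ∈ X, ∃ e ∈ M, v ∈ e

/-! A perfect matching is itself a spanning subgraph all of whose components are single edges.
Conversely, if a spanning such subgraph `H` exists, its degrees are positive and constant along
edges, so a weighted double count gives `|S| ≤ |N_H(S)|` for every independent set `S` of `G`;
as `N_H(S)` is disjoint from `S`, this gives `2 α(G) ≤ |V|`. Together with `2 μ(G) ≤ |V|` and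
`α(G) + μ(G) = |V|` it forces `2 μ(G) = |V|`, so a maximum matching is perfect. -/

open Finset

namespace SimpleGraph

variable {V : Type*} [Fintype V] [DecidableEq V] {K : SimpleGraph V} [DecidableRel K.Adj]

/-- Give each edge `ab` the weight `1 / deg b`: every `a ∈ A` sends out total weight `1`,
and every neighbour `b` of `A` receives at most total weight `1`. -/
theorem card_le_card_biUnion_neighborFinset
    (hdeg : ∀ ⦃u v⦄, K.Adj u v → K.degree u = K.degree v) {A : Finset V}
    (hA : ∀ a ∈ A, 0 < K.degree a) :
    #A ≤ #(A.biUnion (K.neighborFinset ·)) := by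
  set B := A.biUnion (K.neighborFinset ·)
  have weight_sum (a : V) (ha : 0 < K.degree a) :
      ∑ b ∈ K.neighborFinset a, (K.degree a : ℚ)⁻¹ = 1 := by
    rw [sum_const, card_neighborFinset_eq_degree, nsmul_eq_mul,
      mul_inv_cancel₀ (by exact_mod_cast ha.ne')]
  have hB : ∀ b ∈ B, 0 < K.degree b := by
    intro b hb
    obtain ⟨a, -, hab⟩ := mem_biUnion.1 hb
    exact K.degree_pos_iff_exists_adj b |>.2 ⟨a, ((K.mem_neighborFinset _ _).1 hab).symm⟩
  have key : (#A : ℚ) ≤ #B := calc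
    (#A : ℚ) = ∑ a ∈ A, ∑ b ∈ K.neighborFinset a, (K.degree b : ℚ)⁻¹ := by
        rw [card_eq_sum_ones, Nat.cast_sum]
        refine sum_congr rfl fun a ha => ?_
        rw [Nat.cast_one, ← weight_sum a (hA a ha)]
        refine (sum_congr rfl fun b hb => ?_).symm
        rw [hdeg ((K.mem_neighborFinset _ _).1 hb)]
    _ = ∑ b ∈ B, ∑ a ∈ A with K.Adj a b, (K.degree b : ℚ)⁻¹ := by
        refine sum_comm' fun a b => ?_
        simp only [B, mem_filter, mem_biUnion, mem_neighborFinset]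
        exact ⟨fun h => ⟨h, a, h⟩, And.left⟩
    _ ≤ ∑ b ∈ B, ∑ a ∈ K.neighborFinset b, (K.degree b : ℚ)⁻¹ := by
        refine sum_le_sum fun b _ => sum_le_sum_of_subset_of_nonneg (fun a ha => ?_)
          fun _ _ _ => by positivity
        exact (K.mem_neighborFinset _ _).2 (mem_filter.1 ha).2.symm
    _ = #B := by
        rw [card_eq_sum_ones, Nat.cast_sum]
        exact sum_congr rfl fun b hb => by rw [weight_sum b (hB b hb), Nat.cast_one]
  exact_mod_cast key

theorem two_mul_card_le_of_isIndepSet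
    (hdeg : ∀ ⦃u v⦄, K.Adj u v → K.degree u = K.degree v) (hpos : ∀ v, 0 < K.degree v)
    {S : Finset V} (hS : K.IsIndepSet S) :
    2 * #S ≤ Fintype.card V := by
  have hdisj : Disjoint S (S.biUnion (K.neighborFinset ·)) := by
    refine Finset.disjoint_left.2 fun b hbS hbN => ?_
    obtain ⟨a, haS, hab⟩ := mem_biUnion.1 hbN
    have hab := (K.mem_neighborFinset _ _).1 hab
    exact hS haS hbS hab.ne hab
  have hle := card_le_card_biUnion_neighborFinset hdeg (A := S) fun a _ => hpos a
  have hunion :=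
    card_union_of_disjoint hdisj ▸ card_le_univ (S ∪ S.biUnion (K.neighborFinset ·))
  omega

end SimpleGraph

section Matchings

variable {V : Type} {G : SimpleGraph V}

lemma isMatching_empty (G : SimpleGraph V) : IsMatching G ∅ := by
  simp [IsMatching]

lemma exists_isMatching_card_eq_matchNum [Fintype V] (G : SimpleGraph V) :
    ∃ M : Finset (Sym2 V), IsMatching G M ∧ #M = matchNum G := by
  classical
  have hempty : 0 ∈ {n | ∃ M : Finset (Sym2 V), IsMatching G M ∧ #M = n} :=
    ⟨∅, isMatching_empty G, card_empty⟩
  exact Nat.sSup_mem ⟨0, hempty⟩ ⟨_, fun _ ⟨M, _, hn⟩ => hn ▸ M.card_le_univ⟩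

lemma IsMatching.card_biUnion_toFinset [DecidableEq V] {M : Finset (Sym2 V)}
    (hM : IsMatching G M) : #(M.biUnion Sym2.toFinset) = 2 * #M := by
  rw [card_biUnion, sum_congr rfl fun e he => Sym2.card_toFinset_of_not_isDiag e
    (G.not_isDiag_of_mem_edgeSet (hM.1 e he)), sum_const, smul_eq_mul, mul_comm]
  exact fun e he f hf hef => disjoint_left.2 fun v hve hvf =>
    hM.2 e he f hf hef v ⟨Sym2.mem_toFinset.1 hve, Sym2.mem_toFinset.1 hvf⟩

lemma two_mul_matchNum_le [Fintype V] (G : SimpleGraph V) :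
    2 * matchNum G ≤ Fintype.card V := by
  classical
  obtain ⟨M, hM, hcard⟩ := exists_isMatching_card_eq_matchNum G
  rw [← hcard, ← hM.card_biUnion_toFinset]
  exact card_le_univ _

lemma IsMatching.isPerfectMatching_of_two_mul_card_eq [Fintype V] {M : Finset (Sym2 V)}
    (hM : IsMatching G M) (hcard : 2 * #M = Fintype.card V) : IsPerfectMatching G M := by
  classical
  refine ⟨hM, fun v => ?_⟩
  have huniv : M.biUnion Sym2.toFinset = univ :=
    eq_univ_of_card _ (hM.card_biUnion_toFinset.trans hcard)
  obtain ⟨e, he, hve⟩ := mem_biUnion.1 (huniv ▸ mem_univ v)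
  exact ⟨e, he, Sym2.mem_toFinset.1 hve⟩

lemma IsPerfectMatching.verts_matchingSubgraph {M : Finset (Sym2 V)}
    (hM : IsPerfectMatching G M) : (matchingSubgraph G M hM.1.1).verts = Set.univ :=
  Set.eq_univ_of_forall hM.2

lemma IsPerfectMatching.subNdeg_matchingSubgraph {M : Finset (Sym2 V)}
    (hM : IsPerfectMatching G M) (v : V) : subNdeg (matchingSubgraph G M hM.1.1) v = 1 := by
  obtain ⟨e, he, hve⟩ := hM.2 v
  obtain ⟨u, rfl⟩ := Sym2.mem_iff_exists.1 hve
  rw [subNdeg, Set.ncard_eq_one]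
  refine ⟨u, Set.eq_singleton_iff_unique_mem.2 ⟨he, fun w (hw : s(v, w) ∈ M) => ?_⟩⟩
  by_contra hwu
  exact hM.1.2 _ hw _ he (fun h => hwu (Sym2.congr_right.1 h)) v
    ⟨Sym2.mem_mk_left _ _, Sym2.mem_mk_left _ _⟩

lemma IsPerfectMatching.subComponentsAreEdgesOrCycles_matchingSubgraph {M : Finset (Sym2 V)}
    (hM : IsPerfectMatching G M) : SubComponentsAreEdgesOrCycles (matchingSubgraph G M hM.1.1) :=
  ⟨fun v _ => Or.inl (hM.subNdeg_matchingSubgraph v), fun u v _ => by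
    rw [hM.subNdeg_matchingSubgraph, hM.subNdeg_matchingSubgraph]⟩

end Matchings

lemma exists_indep_card_eq_indepNum {V : Type} [Fintype V] (G : SimpleGraph V) :
    ∃ S : Finset V, (∀ u ∈ S, ∀ v ∈ S, ¬ G.Adj u v) ∧ #S = indepNum G := by
  have hempty : 0 ∈ {n | ∃ S : Finset V, (∀ u ∈ S, ∀ v ∈ S, ¬ G.Adj u v) ∧ #S = n} :=
    ⟨∅, by simp, card_empty⟩
  exact Nat.sSup_mem ⟨0, hempty⟩ ⟨_, fun _ ⟨S, _, hn⟩ => hn ▸ S.card_le_univ⟩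

section EdgesOrCycles

variable {V : Type} [Fintype V] {G : SimpleGraph V}

lemma ncard_verts_le_card (H : G.Subgraph) : H.verts.ncard ≤ Fintype.card V := by
  rw [← Nat.card_eq_fintype_card, ← Set.ncard_univ]
  exact Set.ncard_le_ncard (Set.subset_univ _)

lemma bddAbove_prk (G : SimpleGraph V) :
    BddAbove {n | ∃ H : G.Subgraph, SubComponentsAreEdgesOrCycles H ∧ H.verts.ncard = n} :=
  ⟨Fintype.card V, by rintro n ⟨H, -, rfl⟩; exact ncard_verts_le_card H⟩

lemma SubComponentsAreEdgesOrCycles.ncard_verts_le_prk {H : G.Subgraph}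
    (hH : SubComponentsAreEdgesOrCycles H) : H.verts.ncard ≤ prk G :=
  le_csSup (bddAbove_prk G) ⟨H, hH, rfl⟩

lemma prk_le_card (G : SimpleGraph V) : prk G ≤ Fintype.card V :=
  csSup_le' fun _ ⟨H, _, hn⟩ => hn ▸ ncard_verts_le_card H

lemma exists_subComponentsAreEdgesOrCycles_ncard_eq_prk (G : SimpleGraph V) :
    ∃ H : G.Subgraph, SubComponentsAreEdgesOrCycles H ∧ H.verts.ncard = prk G := by
  have hbot :
      0 ∈ {n | ∃ H : G.Subgraph, SubComponentsAreEdgesOrCycles H ∧ H.verts.ncard = n} :=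
    ⟨⊥, ⟨by simp, by simp⟩, by simp⟩
  exact Nat.sSup_mem ⟨0, hbot⟩ (bddAbove_prk G)

lemma subNdeg_eq_degree_spanningCoe (H : G.Subgraph) [DecidableRel H.spanningCoe.Adj]
    (v : V) : subNdeg H v = H.spanningCoe.degree v := by
  rw [← SimpleGraph.card_neighborSet_eq_degree, ← Nat.card_eq_fintype_card, Nat.card_coe_set_eq]
  rfl

lemma SubComponentsAreEdgesOrCycles.two_mul_indepNum_le {H : G.Subgraph}
    (hH : SubComponentsAreEdgesOrCycles H) (hspan : H.verts = Set.univ) :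
    2 * indepNum G ≤ Fintype.card V := by
  classical
  obtain ⟨S, hS, hcard⟩ := exists_indep_card_eq_indepNum G
  rw [← hcard]
  refine SimpleGraph.two_mul_card_le_of_isIndepSet (K := H.spanningCoe) (fun u v huv => ?_)
    (fun v => ?_) fun u hu v hv _ huv => hS u hu v hv (H.adj_sub huv)
  · simp only [← subNdeg_eq_degree_spanningCoe]
    exact hH.2 huv
  · rw [← subNdeg_eq_degree_spanningCoe]
    rcases hH.1 v (hspan ▸ Set.mem_univ v) with h | h <;> omega

end EdgesOrCycles

/-- A König–Egerváry graph `G` has a perfect matching iff every subgraph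
of `G` of maximum order among the subgraphs whose components are single edges or cycles is
a spanning subgraph of `G`; equivalently, iff `prk(G) = |V(G)|`. -/
theorem stmt16 {V : Type} [Fintype V] (G : SimpleGraph V) (hKE : IsKonigEgervary G) :
    (∃ M : Finset (Sym2 V), IsPerfectMatching G M) ↔
      ((∀ H : G.Subgraph, SubComponentsAreEdgesOrCycles H →
          (∀ H' : G.Subgraph, SubComponentsAreEdgesOrCycles H' →
            H'.verts.ncard ≤ H.verts.ncard) →
          H.verts = Set.univ) ∧
        prk G = Fintype.card V) := by
  constructor
  · rintro ⟨M, hM⟩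
    have hM' := hM.subComponentsAreEdgesOrCycles_matchingSubgraph
    have hcard : (matchingSubgraph G M hM.1.1).verts.ncard = Fintype.card V := by
      rw [hM.verts_matchingSubgraph, Set.ncard_univ, Nat.card_eq_fintype_card]
    refine ⟨fun H _ hmax => ?_, (prk_le_card G).antisymm (hcard ▸ hM'.ncard_verts_le_prk)⟩
    refine Set.eq_of_subset_of_ncard_le (Set.subset_univ _) ?_
    rw [Set.ncard_univ, Nat.card_eq_fintype_card, ← hcard]
    exact hmax _ hM'
  · rintro ⟨hspanning, -⟩
    obtain ⟨H, hH, hHprk⟩ := exists_subComponentsAreEdgesOrCycles_ncard_eq_prk G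
    have hα := hH.two_mul_indepNum_le <| hspanning H hH fun H' hH' =>
      hHprk ▸ hH'.ncard_verts_le_prk
    have hμ := two_mul_matchNum_le G
    obtain ⟨M, hM, hMcard⟩ := exists_isMatching_card_eq_matchNum G
    refine ⟨M, hM.isPerfectMatching_of_two_mul_card_eq ?_⟩
    unfold IsKonigEgervary at hKE
    omega
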